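/- arXiv:2402.06701 — 8 statements merged into one kernel-verified Lean document; each statement's English description precedes it below -/
import Mathlib

section
/- Let m ≥ 1 be a natural number and let p : ℝ → [0,∞) be a strictly positive measurable probability density with cumulative distribution function F(u) = ∫_{-∞}^{u} p(t) dt. Let u_1,…,u_m and u'_1,…,u'_m be real numbers with |u_i − u'_i| ≤ 1 for every i. For each i define P_i = ∫_ℝ p(r) · ∏_{j≠i} F(u_i + r − u_j) dr and P'_i = ∫_ℝ p(r) · ∏_{j≠i} F(u'_i + r − u'_j) dr (these are the probabilities that candidate i achieves the noisy maximum when i.i.d. noise with density p is added to the scores u_1,…,u_m, respectively u'_1,…,u'_m). Then for every ε ∈ ℝ: ∑_{i=1}^m max(P_i − e^ε · P'_i, 0) ≤ m · ∫_ℝ max(p(r−2) − e^ε · p(r), 0) dr. -/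
open MeasureTheory Real Finset

/-!
Write `G_i(r) = ∏_{j ≠ i} F(u_i + r - u_j)`, so that `P_i = ∫ p G_i` with `0 ≤ G_i ≤ 1`. Since
every score moves by at most `1`, `G_i(r - 2)` is bounded by the corresponding product for `u'`,
hence `P'_i ≥ ∫ p(r) G_i(r - 2) dr`, while `P_i = ∫ p(r - 2) G_i(r - 2) dr` by translation
invariance. Therefore `P_i - e^ε P'_i ≤ ∫ (p(r - 2) - e^ε p(r)) G_i(r - 2) dr`, and a test function
with values in `[0, 1]` cannot make this exceed the positive part of the integrand.
-/

lemma monotone_setIntegral_Iio {p : ℝ → ℝ} (hp : Integrable p) (hp0 : ∀ x, 0 ≤ p x) :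
    Monotone fun u => ∫ t in Set.Iio u, p t := fun _ _ hab =>
  setIntegral_mono_set hp.integrableOn (.of_forall hp0) (.of_forall (Set.Iio_subset_Iio hab))

lemma prod_le_prod_of_abs_sub_le {ι : Type*} {F : ℝ → ℝ} (hF : Monotone F) (hF0 : ∀ x, 0 ≤ F x)
    {u u' : ι → ℝ} {δ : ℝ} (hu : ∀ i, |u i - u' i| ≤ δ) (s : Finset ι) (i : ι) (r : ℝ) :
    ∏ j ∈ s, F (u i + (r - 2 * δ) - u j) ≤ ∏ j ∈ s, F (u' i + r - u' j) :=
  prod_le_prod (fun _ _ => hF0 _) fun j _ => hF <| by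
    linarith [(abs_le.mp (hu i)).2, (abs_le.mp (hu j)).1]

lemma integral_mul_le_integral_max_zero {α : Type*} [MeasurableSpace α] {μ : Measure α}
    {f g : α → ℝ} (hf : Integrable f μ) (hg : AEStronglyMeasurable g μ) (hg0 : ∀ x, 0 ≤ g x)
    (hg1 : ∀ x, g x ≤ 1) :
    ∫ x, f x * g x ∂μ ≤ ∫ x, max (f x) 0 ∂μ := by
  refine integral_mono (hf.mul_bdd hg (c := 1) (.of_forall fun x => ?_)) hf.pos_part fun x => ?_
  · rw [Real.norm_eq_abs, abs_of_nonneg (hg0 x)]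
    exact hg1 x
  · calc f x * g x ≤ max (f x) 0 * g x := mul_le_mul_of_nonneg_right (le_max_left _ _) (hg0 x)
      _ ≤ max (f x) 0 := mul_le_of_le_one_right (le_max_right _ _) (hg1 x)

lemma integral_mul_sub_le_hockeyStick {G : Type*} [MeasurableSpace G] [AddGroup G]
    [MeasurableAdd G] {μ : Measure G} [μ.IsAddRightInvariant] {p g g' : G → ℝ} {c : ℝ}
    (hp : Integrable p μ) (hp0 : ∀ x, 0 ≤ p x) (hg : Measurable g) (hg0 : ∀ x, 0 ≤ g x)
    (hg1 : ∀ x, g x ≤ 1) (hg' : Measurable g') (hg'1 : ∀ x, g' x ≤ 1) (shift : G)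
    (hgg' : ∀ x, g (x - shift) ≤ g' x) (hc : 0 ≤ c) :
    ∫ x, p x * g x ∂μ - c * ∫ x, p x * g' x ∂μ
      ≤ ∫ x, max (p (x - shift) - c * p x) 0 ∂μ := by
  have hp_mul {h : G → ℝ} (hh : Measurable h) (hh0 : ∀ x, 0 ≤ h x) (hh1 : ∀ x, h x ≤ 1) :
      Integrable (fun x => p x * h x) μ :=
    hp.mul_bdd hh.aestronglyMeasurable (c := 1) (.of_forall fun x => by
      rw [Real.norm_eq_abs, abs_of_nonneg (hh0 x)]
      exact hh1 x)
  have hg_shift : Measurable fun x => g (x - shift) := by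
    simp_rw [sub_eq_add_neg]
    exact hg.comp (measurable_add_const _)
  have hpg_shift := hp_mul hg_shift (fun _ => hg0 _) fun _ => hg1 _
  have hpg' := hp_mul hg' (fun x => (hg0 _).trans (hgg' x)) hg'1
  have hpg'_ge : ∫ x, p x * g (x - shift) ∂μ ≤ ∫ x, p x * g' x ∂μ :=
    integral_mono hpg_shift hpg' fun x => mul_le_mul_of_nonneg_left (hgg' x) (hp0 x)
  have hdiff : Integrable (fun x => p (x - shift) - c * p x) μ :=
    (hp.comp_sub_right shift).sub (hp.const_mul c)
  calc ∫ x, p x * g x ∂μ - c * ∫ x, p x * g' x ∂μ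
      ≤ ∫ x, p (x - shift) * g (x - shift) ∂μ - c * ∫ x, p x * g (x - shift) ∂μ := by
        rw [integral_sub_right_eq_self (fun x => p x * g x) shift]
        exact sub_le_sub_left (mul_le_mul_of_nonneg_left hpg'_ge hc) _
    _ = ∫ x, (p (x - shift) - c * p x) * g (x - shift) ∂μ := by
        rw [← integral_const_mul, ← integral_sub]
        · simp only [sub_mul, mul_assoc]
        · exact (hp_mul hg hg0 hg1).comp_sub_right shift
        · exact hpg_shift.const_mul c
    _ ≤ ∫ x, max (p (x - shift) - c * p x) 0 ∂μ :=
        integral_mul_le_integral_max_zero hdiff hg_shift.aestronglyMeasurable (fun _ => hg0 _)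
          fun _ => hg1 _

theorem rnm_privacy_profile_general
    (m : ℕ)
    (p : ℝ → ℝ) (hp_pos : ∀ x, 0 < p x)
    (hp_int : Integrable p) (hp_one : ∫ x, p x = 1)
    (F : ℝ → ℝ) (hF : ∀ u, F u = ∫ t in Set.Iio u, p t)
    (u u' : Fin m → ℝ) (hu : ∀ i, |u i - u' i| ≤ 1)
    (P P' : Fin m → ℝ)
    (hP : ∀ i, P i = ∫ r, p r * ∏ j ∈ Finset.univ.erase i, F (u i + r - u j))
    (hP' : ∀ i, P' i = ∫ r, p r * ∏ j ∈ Finset.univ.erase i, F (u' i + r - u' j))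
    (ε : ℝ) :
    ∑ i, max (P i - Real.exp ε * P' i) 0
      ≤ m * ∫ r, max (p (r - 2) - Real.exp ε * p r) 0 := by
  have hp0 (x : ℝ) : 0 ≤ p x := (hp_pos x).le
  obtain rfl : F = fun u => ∫ t in Set.Iio u, p t := funext hF
  have hF_mono := monotone_setIntegral_Iio hp_int hp0
  have hF0 (x : ℝ) : 0 ≤ ∫ t in Set.Iio x, p t :=
    setIntegral_nonneg measurableSet_Iio fun t _ => hp0 t
  have hF1 (x : ℝ) : ∫ t in Set.Iio x, p t ≤ 1 :=
    hp_one ▸ setIntegral_le_integral hp_int (.of_forall hp0)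
  have hG_meas (v : Fin m → ℝ) (i : Fin m) :
      Measurable fun r => ∏ j ∈ univ.erase i, ∫ t in Set.Iio (v i + r - v j), p t :=
    Finset.measurable_prod _ fun j _ => hF_mono.measurable.comp (by fun_prop)
  have hG1 (v : Fin m → ℝ) (i : Fin m) (r : ℝ) :
      ∏ j ∈ univ.erase i, ∫ t in Set.Iio (v i + r - v j), p t ≤ 1 :=
    prod_le_one (fun _ _ => hF0 _) fun _ _ => hF1 _
  have hcandidate (i : Fin m) :
      max (P i - exp ε * P' i) 0 ≤ ∫ r, max (p (r - 2) - exp ε * p r) 0 := by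
    refine max_le ?_ (integral_nonneg fun _ => le_max_right _ _)
    rw [hP, hP']
    refine integral_mul_sub_le_hockeyStick hp_int hp0 (hG_meas u i)
      (fun _ => prod_nonneg fun _ _ => hF0 _) (hG1 u i) (hG_meas u' i) (hG1 u' i) 2
      (fun r => ?_) (exp_pos ε).le
    simpa only [mul_one] using prod_le_prod_of_abs_sub_le hF_mono hF0 hu _ i r
  calc ∑ i, max (P i - exp ε * P' i) 0
      ≤ (univ : Finset (Fin m)).card • ∫ r, max (p (r - 2) - exp ε * p r) 0 :=
        sum_le_card_nsmul _ _ _ fun i _ => hcandidate i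
    _ = m * ∫ r, max (p (r - 2) - exp ε * p r) 0 := by
        rw [card_univ, Fintype.card_fin, nsmul_eq_mul]

/-- Privacy profile bound for Report Noisy Max with additive noise (Theorem 3.2). -/
theorem rnm_privacy_profile
    (m : ℕ) (hm : 1 ≤ m)
    (p : ℝ → ℝ) (hp_pos : ∀ x, 0 < p x) (hp_meas : Measurable p)
    (hp_int : Integrable p) (hp_one : ∫ x, p x = 1)
    (F : ℝ → ℝ) (hF : ∀ u, F u = ∫ t in Set.Iio u, p t)
    (u u' : Fin m → ℝ) (hu : ∀ i, |u i - u' i| ≤ 1)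
    (P P' : Fin m → ℝ)
    (hP : ∀ i, P i = ∫ r, p r * ∏ j ∈ Finset.univ.erase i, F (u i + r - u j))
    (hP' : ∀ i, P' i = ∫ r, p r * ∏ j ∈ Finset.univ.erase i, F (u' i + r - u' j))
    (ε : ℝ) :
    ∑ i, max (P i - Real.exp ε * P' i) 0
      ≤ m * ∫ r, max (p (r - 2) - Real.exp ε * p r) 0 :=
  rnm_privacy_profile_general m p hp_pos hp_int hp_one F hF u u' hu P P' hP hP' ε
end

section
/- Let m ≥ 1 be a natural number and let p : ℝ → [0,∞) be a strictly positive measurable probability density with cumulative distribution function F(u) = ∫_{-∞}^{u} p(t) dt. Let u_1,…,u_m and u'_1,…,u'_m be real numbers with u'_i ≤ u_i ≤ u'_i + 1 for every i (the monotone case). For each i define P_i = ∫_ℝ p(r) · ∏_{j≠i} F(u_i + r − u_j) dr and P'_i = ∫_ℝ p(r) · ∏_{j≠i} F(u'_i + r − u'_j) dr. Then for every ε ∈ ℝ: ∑_{i=1}^m max(P_i − e^ε · P'_i, 0) ≤ m · ∫_ℝ max(p(r−1) − e^ε · p(r), 0) dr. -/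
open MeasureTheory Real

/-- Monotone variant of the privacy profile bound for Report Noisy Max (Theorem 3.2). -/
theorem rnm_privacy_profile_monotone
    (m : ℕ) (hm : 1 ≤ m)
    (p : ℝ → ℝ) (hp_pos : ∀ x, 0 < p x) (hp_meas : Measurable p)
    (hp_int : Integrable p) (hp_one : ∫ x, p x = 1)
    (F : ℝ → ℝ) (hF : ∀ u, F u = ∫ t in Set.Iio u, p t)
    (u u' : Fin m → ℝ) (hu_le : ∀ i, u' i ≤ u i) (hu_ge : ∀ i, u i ≤ u' i + 1)
    (P P' : Fin m → ℝ)
    (hP : ∀ i, P i = ∫ r, p r * ∏ j ∈ Finset.univ.erase i, F (u i + r - u j))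
    (hP' : ∀ i, P' i = ∫ r, p r * ∏ j ∈ Finset.univ.erase i, F (u' i + r - u' j))
    (ε : ℝ) :
    ∑ i, max (P i - Real.exp ε * P' i) 0
      ≤ m * ∫ r, max (p (r - 1) - Real.exp ε * p r) 0 := by
  set E := Real.exp ε with hEdef
  have hEpos : 0 < E := Real.exp_pos ε
  have hp0 : ∀ x, 0 ≤ p x := fun x => (hp_pos x).le
  have hF_nonneg : ∀ x, 0 ≤ F x := by
    intro x; rw [hF]
    exact setIntegral_nonneg measurableSet_Iio fun t _ => hp0 t
  have hF_le_one : ∀ x, F x ≤ 1 := by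
    intro x; rw [hF, ← hp_one]
    exact setIntegral_le_integral hp_int (Filter.Eventually.of_forall hp0)
  have hF_mono : Monotone F := by
    intro a b hab
    rw [hF, hF]
    exact setIntegral_mono_set hp_int.integrableOn
      (Filter.Eventually.of_forall hp0)
      (HasSubset.Subset.eventuallyLE (Set.Iio_subset_Iio hab))
  have hF_meas : Measurable F := hF_mono.measurable
  set I := ∫ r, max (p (r - 1) - E * p r) 0 with hIdef
  have hInt_shift : Integrable (fun r => p (r - 1)) := hp_int.comp_sub_right 1
  have hInt_shift' : Integrable (fun r => p (r + 1)) := hp_int.comp_add_right 1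
  have hI_nonneg : 0 ≤ I :=
    integral_nonneg fun r => le_max_right _ _
  have key : ∀ i : Fin m, max (P i - E * P' i) 0 ≤ I := by
    intro i
    set g : ℝ → ℝ := fun r => ∏ j ∈ Finset.univ.erase i, F (u i + r - u j) with hgdef
    have hg_meas : Measurable g := by
      apply Finset.measurable_prod
      intro j _
      exact hF_meas.comp ((measurable_const.add measurable_id).sub measurable_const)
    have hg0 : ∀ r, 0 ≤ g r := fun r =>
      Finset.prod_nonneg fun j _ => hF_nonneg _
    have hg1 : ∀ r, g r ≤ 1 := fun r =>
      Finset.prod_le_one (fun j _ => hF_nonneg _) (fun j _ => hF_le_one _)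
    -- the P' integrand and its properties
    set g' : ℝ → ℝ := fun r => ∏ j ∈ Finset.univ.erase i, F (u' i + r - u' j) with hg'def
    have hg'_meas : Measurable g' := by
      apply Finset.measurable_prod
      intro j _
      exact hF_meas.comp ((measurable_const.add measurable_id).sub measurable_const)
    have hg'0 : ∀ r, 0 ≤ g' r := fun r =>
      Finset.prod_nonneg fun j _ => hF_nonneg _
    have hg'1 : ∀ r, g' r ≤ 1 := fun r =>
      Finset.prod_le_one (fun j _ => hF_nonneg _) (fun j _ => hF_le_one _)
    -- integrability facts
    have hA : Integrable (fun r => p r * g r) := by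
      refine hp_int.mono' (hp_meas.mul hg_meas).aestronglyMeasurable
        (Filter.Eventually.of_forall fun r => ?_)
      rw [Real.norm_eq_abs, abs_of_nonneg (mul_nonneg (hp0 r) (hg0 r))]
      exact mul_le_of_le_one_right (hp0 r) (hg1 r)
    have hB : Integrable (fun r => p (r + 1) * g r) := by
      refine hInt_shift'.mono'
        ((hp_meas.comp (measurable_id.add_const 1)).mul hg_meas).aestronglyMeasurable
        (Filter.Eventually.of_forall fun r => ?_)
      rw [Real.norm_eq_abs, abs_of_nonneg (mul_nonneg (hp0 _) (hg0 r))]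
      exact mul_le_of_le_one_right (hp0 _) (hg1 r)
    have hC : Integrable (fun r => p r * g (r - 1)) := by
      refine hp_int.mono'
        ((hp_meas.mul (hg_meas.comp (measurable_id.sub_const 1)))).aestronglyMeasurable
        (Filter.Eventually.of_forall fun r => ?_)
      rw [Real.norm_eq_abs, abs_of_nonneg (mul_nonneg (hp0 r) (hg0 _))]
      exact mul_le_of_le_one_right (hp0 r) (hg1 _)
    have hD : Integrable (fun r => p r * g' r) := by
      refine hp_int.mono' (hp_meas.mul hg'_meas).aestronglyMeasurable
        (Filter.Eventually.of_forall fun r => ?_)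
      rw [Real.norm_eq_abs, abs_of_nonneg (mul_nonneg (hp0 r) (hg'0 r))]
      exact mul_le_of_le_one_right (hp0 r) (hg'1 r)
    have hM : Integrable (fun r => max (p r - E * p (r + 1)) 0) := by
      refine hp_int.mono'
        (((hp_meas.sub ((hp_meas.comp (measurable_id.add_const 1)).const_mul E)).max
          measurable_const)).aestronglyMeasurable
        (Filter.Eventually.of_forall fun r => ?_)
      rw [Real.norm_eq_abs, abs_of_nonneg (le_max_right _ _)]
      refine max_le ?_ (hp0 r)
      have : 0 ≤ E * p (r + 1) := mul_nonneg hEpos.le (hp0 _)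
      linarith
    -- shift identity: ∫ p(r+1) g r = ∫ p r * g (r-1)
    have shift1 : (∫ r, p r * g (r - 1)) = ∫ r, p (r + 1) * g r := by
      simpa using integral_sub_right_eq_self (μ := volume) (fun x => p (x + 1) * g x) (1:ℝ)
    -- monotone domination: g (r-1) ≤ g' r
    have hgle : ∀ r, g (r - 1) ≤ g' r := by
      intro r
      refine Finset.prod_le_prod (fun j _ => hF_nonneg _) (fun j _ => ?_)
      apply hF_mono
      have h1 := hu_ge i
      have h2 := hu_le j
      linarith
    have hP'_ge : (∫ r, p (r + 1) * g r) ≤ P' i := by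
      rw [hP' i, ← shift1]
      refine integral_mono hC hD fun r => ?_
      exact mul_le_mul_of_nonneg_left (hgle r) (hp0 r)
    -- main pointwise bound
    have hmain : P i - E * P' i ≤ ∫ r, max (p r - E * p (r + 1)) 0 := by
      have step1 : P i - E * P' i ≤
          (∫ r, p r * g r) - E * ∫ r, p (r + 1) * g r := by
        rw [hP i]
        have := mul_le_mul_of_nonneg_left hP'_ge hEpos.le
        exact sub_le_sub le_rfl this
      have step2 : (∫ r, p r * g r) - E * (∫ r, p (r + 1) * g r)
          = ∫ r, (p r * g r - E * (p (r + 1) * g r)) := by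
        rw [integral_sub hA (hB.const_mul E), integral_const_mul]
      have step3 : (∫ r, (p r * g r - E * (p (r + 1) * g r)))
          ≤ ∫ r, max (p r - E * p (r + 1)) 0 := by
        refine integral_mono (hA.sub (hB.const_mul E)) hM fun r => ?_
        have : p r * g r - E * (p (r + 1) * g r) = (p r - E * p (r + 1)) * g r := by ring
        rw [this]
        calc (p r - E * p (r + 1)) * g r
            ≤ max (p r - E * p (r + 1)) 0 * g r :=
              mul_le_mul_of_nonneg_right (le_max_left _ _) (hg0 r)
          _ ≤ max (p r - E * p (r + 1)) 0 * 1 :=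
              mul_le_mul_of_nonneg_left (hg1 r) (le_max_right _ _)
          _ = max (p r - E * p (r + 1)) 0 := mul_one _
      linarith [step1, step2 ▸ step3]
    have hshift2 : (∫ r, max (p r - E * p (r + 1)) 0) = I := by
      rw [hIdef]
      simpa using integral_add_right_eq_self (μ := volume) (fun x => max (p (x - 1) - E * p x) 0) (1:ℝ)
    rw [← hshift2] at hI_nonneg ⊢
    exact max_le hmain hI_nonneg
  calc ∑ i, max (P i - E * P' i) 0 ≤ ∑ _i : Fin m, I :=
        Finset.sum_le_sum fun i _ => key i
    _ = m * I := by
        rw [Finset.sum_const, Finset.card_univ, Fintype.card_fin, nsmul_eq_mul]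
end

section
/- Let m ≥ 1, let p : ℝ → (0,∞) be a strictly positive measurable probability density, let a, a' : ℝ → (0,∞) be strictly positive measurable probability densities, and let b, b' : ℝ × ℝ → (0,∞) be strictly positive measurable functions such that b(t,·) and b'(t,·) are probability densities for every t ∈ ℝ. Assume: (i) for every s ∈ ℝ, ∫_ℝ max(a(t) − e^s a'(t), 0) dt ≤ m · ∫_ℝ max(p(t−2) − e^s p(t), 0) dt; and (ii) for every t ∈ ℝ and every s ∈ ℝ, ∫_ℝ max(b(t,y) − e^s b'(t,y), 0) dy ≤ m · ∫_ℝ max(p(y−2) − e^s p(y), 0) dy. Then for every ε ∈ ℝ: ∫_ℝ ∫_ℝ max(a(t)·b(t,y) − e^ε · a'(t)·b'(t,y), 0) dy dt ≤ m² · ∫_ℝ ∫_ℝ max(p(t−2)·p(y−2) − e^ε · p(t)·p(y), 0) dy dt. -/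
open MeasureTheory Real

/-- Rescaling lemma: hockey-stick bound is preserved under positive scaling of the two sides. -/
lemma hs_scale (m : ℕ) (c c' : ℝ) (hc : 0 < c) (hc' : 0 < c')
    (f g P Q : ℝ → ℝ)
    (h : ∀ s : ℝ, ∫ y, max (f y - Real.exp s * g y) 0
        ≤ m * ∫ y, max (P y - Real.exp s * Q y) 0)
    (ε : ℝ) :
    ∫ y, max (c * f y - Real.exp ε * (c' * g y)) 0
      ≤ m * ∫ y, max (c * P y - Real.exp ε * (c' * Q y)) 0 := by
  set s := ε + Real.log c' - Real.log c with hs_def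
  have hs : Real.exp s = Real.exp ε * c' / c := by
    rw [hs_def, Real.exp_sub, Real.exp_add, Real.exp_log hc, Real.exp_log hc']
  have key : ∀ u v : ℝ, c * u - Real.exp ε * (c' * v) = c * (u - Real.exp s * v) := by
    intro u v; rw [hs]; field_simp
  have e1 : (fun y => max (c * f y - Real.exp ε * (c' * g y)) 0)
      = fun y => c * max (f y - Real.exp s * g y) 0 := by
    funext y; rw [key, mul_max_of_nonneg _ _ hc.le, mul_zero]
  have e2 : (fun y => max (c * P y - Real.exp ε * (c' * Q y)) 0)
      = fun y => c * max (P y - Real.exp s * Q y) 0 := by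
    funext y; rw [key, mul_max_of_nonneg _ _ hc.le, mul_zero]
  rw [e1, e2, integral_const_mul, integral_const_mul]
  calc c * ∫ y, max (f y - Real.exp s * g y) 0
      ≤ c * (m * ∫ y, max (P y - Real.exp s * Q y) 0) :=
        mul_le_mul_of_nonneg_left (h s) hc.le
    _ = m * (c * ∫ y, max (P y - Real.exp s * Q y) 0) := by ring

/-- Integrability of a nonneg jointly measurable function on the product from a bound on slices. -/
lemma int_dom (H : ℝ → ℝ → ℝ) (hH : Measurable (Function.uncurry H))
    (hnn : ∀ t y, 0 ≤ H t y)
    (u : ℝ → ℝ) (hu : Integrable u)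
    (hslice : ∀ t, Integrable (H t))
    (hbound : ∀ t, ∫ y, H t y ≤ u t) :
    Integrable (Function.uncurry H) ((volume : Measure ℝ).prod volume) := by
  rw [integrable_prod_iff hH.aestronglyMeasurable]
  simp only [Function.uncurry_apply_pair]
  constructor
  · exact Filter.Eventually.of_forall fun t => hslice t
  · have hmeas : StronglyMeasurable fun t => ∫ y, H t y ∂(volume : Measure ℝ) :=
      MeasureTheory.StronglyMeasurable.integral_prod_right (ν := volume) hH.stronglyMeasurable
    refine Integrable.mono' hu ?_ (Filter.Eventually.of_forall fun t => ?_)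
    · have : (fun t => ∫ y, ‖H t y‖) = fun t => ∫ y, H t y := by
        funext t; congr 1; funext y; exact Real.norm_of_nonneg (hnn t y)
      rw [this]; exact hmeas.aestronglyMeasurable
    · have h1 : (0:ℝ) ≤ ∫ y, ‖H t y‖ := integral_nonneg fun y => norm_nonneg _
      have h2 : (∫ y, ‖H t y‖) = ∫ y, H t y := by
        congr 1; funext y; exact Real.norm_of_nonneg (hnn t y)
      rw [Real.norm_of_nonneg h1, h2]; exact hbound t

/-- Integrability and integral bound for a truncated difference of nonnegative functions. -/
lemma max_piece (φ ψ : ℝ → ℝ) (hφ : Integrable φ) (hφnn : ∀ y, 0 ≤ φ y)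
    (hψmeas : AEStronglyMeasurable ψ (volume : Measure ℝ)) (hψnn : ∀ y, 0 ≤ ψ y) :
    Integrable (fun y => max (φ y - ψ y) 0) (volume : Measure ℝ) ∧
      (∫ y, max (φ y - ψ y) 0) ≤ ∫ y, φ y := by
  have hmeas : AEStronglyMeasurable (fun y => max (φ y - ψ y) 0) (volume : Measure ℝ) :=
    (hφ.aestronglyMeasurable.sub hψmeas).sup aestronglyMeasurable_const
  have hb : ∀ y, max (φ y - ψ y) 0 ≤ φ y := fun y =>
    max_le (le_trans (sub_le_self _ (hψnn y)) le_rfl) (hφnn y)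
  have hint : Integrable (fun y => max (φ y - ψ y) 0) (volume : Measure ℝ) := by
    refine hφ.mono' hmeas (Filter.Eventually.of_forall fun y => ?_)
    rw [Real.norm_of_nonneg (le_max_right _ _)]
    exact hb y
  exact ⟨hint, integral_mono hint hφ hb⟩

/-- Adaptive composition of two Report Noisy Max mechanisms of additive-noise type
(Theorem 3.3, analytic content). -/
theorem rnm_adaptive_composition
    (m : ℕ) (hm : 1 ≤ m)
    (p : ℝ → ℝ) (hp_pos : ∀ x, 0 < p x) (hp_meas : Measurable p)
    (hp_int : Integrable p) (hp_one : ∫ x, p x = 1)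
    (a a' : ℝ → ℝ)
    (ha_pos : ∀ t, 0 < a t) (ha_meas : Measurable a)
    (ha_int : Integrable a) (ha_one : ∫ t, a t = 1)
    (ha'_pos : ∀ t, 0 < a' t) (ha'_meas : Measurable a')
    (ha'_int : Integrable a') (ha'_one : ∫ t, a' t = 1)
    (b b' : ℝ → ℝ → ℝ)
    (hb_pos : ∀ t y, 0 < b t y) (hb_meas : Measurable (Function.uncurry b))
    (hb_int : ∀ t, Integrable (b t)) (hb_one : ∀ t, ∫ y, b t y = 1)
    (hb'_pos : ∀ t y, 0 < b' t y) (hb'_meas : Measurable (Function.uncurry b'))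
    (hb'_int : ∀ t, Integrable (b' t)) (hb'_one : ∀ t, ∫ y, b' t y = 1)
    (h1 : ∀ s : ℝ, ∫ t, max (a t - Real.exp s * a' t) 0
        ≤ m * ∫ t, max (p (t - 2) - Real.exp s * p t) 0)
    (h2 : ∀ t : ℝ, ∀ s : ℝ, ∫ y, max (b t y - Real.exp s * b' t y) 0
        ≤ m * ∫ y, max (p (y - 2) - Real.exp s * p y) 0)
    (ε : ℝ) :
    ∫ t, ∫ y, max (a t * b t y - Real.exp ε * (a' t * b' t y)) 0
      ≤ (m : ℝ) ^ 2 * ∫ t, ∫ y,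
          max (p (t - 2) * p (y - 2) - Real.exp ε * (p t * p y)) 0 := by
  have hp2_meas : Measurable fun y : ℝ => p (y - 2) :=
    hp_meas.comp (measurable_id.sub measurable_const)
  have hp2_int : Integrable (fun y : ℝ => p (y - 2)) := hp_int.comp_sub_right 2
  have hp2_one : (∫ y : ℝ, p (y - 2)) = 1 := by
    rw [integral_sub_right_eq_self p (2 : ℝ)]; exact hp_one
  -- pointwise (in t) first-round bound
  have step1 : ∀ t, ∫ y, max (a t * b t y - Real.exp ε * (a' t * b' t y)) 0
      ≤ m * ∫ y, max (a t * p (y - 2) - Real.exp ε * (a' t * p y)) 0 := fun t =>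
    hs_scale m (a t) (a' t) (ha_pos t) (ha'_pos t) (b t) (b' t)
      (fun y => p (y - 2)) p (h2 t) ε
  -- pointwise (in y) second-round bound
  have step4 : ∀ y, ∫ t, max (a t * p (y - 2) - Real.exp ε * (a' t * p y)) 0
      ≤ m * ∫ t, max (p (t - 2) * p (y - 2) - Real.exp ε * (p t * p y)) 0 := by
    intro y
    have h := hs_scale m (p (y - 2)) (p y) (hp_pos _) (hp_pos _) a a'
      (fun t => p (t - 2)) p h1 ε
    have e1 : (fun t => max (a t * p (y - 2) - Real.exp ε * (a' t * p y)) 0)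
        = fun t => max (p (y - 2) * a t - Real.exp ε * (p y * a' t)) 0 := by
      funext t; rw [mul_comm (a t), mul_comm (a' t)]
    have e2 : (fun t => max (p (t - 2) * p (y - 2) - Real.exp ε * (p t * p y)) 0)
        = fun t => max (p (y - 2) * p (t - 2) - Real.exp ε * (p y * p t)) 0 := by
      funext t; rw [mul_comm (p (t - 2)), mul_comm (p t)]
    rw [e1, e2]; exact h
  -- integrability of the three double integrands
  have intF : Integrable
      (Function.uncurry fun t y => max (a t * b t y - Real.exp ε * (a' t * b' t y)) 0)
      ((volume : Measure ℝ).prod volume) := by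
    refine int_dom _ ?_ (fun t y => le_max_right _ _) a ha_int (fun t => ?_) (fun t => ?_)
    · exact (((ha_meas.comp measurable_fst).mul hb_meas).sub
        (measurable_const.mul ((ha'_meas.comp measurable_fst).mul hb'_meas))).max
        measurable_const
    · exact (max_piece (fun y => a t * b t y) (fun y => Real.exp ε * (a' t * b' t y))
        ((hb_int t).const_mul _) (fun y => (mul_pos (ha_pos t) (hb_pos t y)).le)
        ((measurable_const.mul (measurable_const.mul
          (hb'_meas.of_uncurry_left))).aestronglyMeasurable)
        (fun y => (mul_pos (Real.exp_pos ε)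
          (mul_pos (ha'_pos t) (hb'_pos t y))).le)).1
    · calc (∫ y, max (a t * b t y - Real.exp ε * (a' t * b' t y)) 0)
          ≤ ∫ y, a t * b t y := (max_piece (fun y => a t * b t y)
            (fun y => Real.exp ε * (a' t * b' t y))
            ((hb_int t).const_mul _) (fun y => (mul_pos (ha_pos t) (hb_pos t y)).le)
            ((measurable_const.mul (measurable_const.mul
              (hb'_meas.of_uncurry_left))).aestronglyMeasurable)
            (fun y => (mul_pos (Real.exp_pos ε)
              (mul_pos (ha'_pos t) (hb'_pos t y))).le)).2
        _ = a t := by rw [integral_const_mul, hb_one t, mul_one]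
  have intG : Integrable
      (Function.uncurry fun t y => max (a t * p (y - 2) - Real.exp ε * (a' t * p y)) 0)
      ((volume : Measure ℝ).prod volume) := by
    refine int_dom _ ?_ (fun t y => le_max_right _ _) a ha_int (fun t => ?_) (fun t => ?_)
    · exact (((ha_meas.comp measurable_fst).mul (hp2_meas.comp measurable_snd)).sub
        (measurable_const.mul ((ha'_meas.comp measurable_fst).mul
          (hp_meas.comp measurable_snd)))).max measurable_const
    · exact (max_piece (fun y => a t * p (y - 2)) (fun y => Real.exp ε * (a' t * p y))
        (hp2_int.const_mul _) (fun y => (mul_pos (ha_pos t) (hp_pos _)).le)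
        ((measurable_const.mul (measurable_const.mul hp_meas)).aestronglyMeasurable)
        (fun y => (mul_pos (Real.exp_pos ε) (mul_pos (ha'_pos t) (hp_pos y))).le)).1
    · calc (∫ y, max (a t * p (y - 2) - Real.exp ε * (a' t * p y)) 0)
          ≤ ∫ y, a t * p (y - 2) := (max_piece (fun y => a t * p (y - 2))
            (fun y => Real.exp ε * (a' t * p y))
            (hp2_int.const_mul _) (fun y => (mul_pos (ha_pos t) (hp_pos _)).le)
            ((measurable_const.mul (measurable_const.mul hp_meas)).aestronglyMeasurable)
            (fun y => (mul_pos (Real.exp_pos ε) (mul_pos (ha'_pos t) (hp_pos y))).le)).2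
        _ = a t := by rw [integral_const_mul, hp2_one, mul_one]
  have intK : Integrable
      (Function.uncurry fun t y => max (p (t - 2) * p (y - 2) - Real.exp ε * (p t * p y)) 0)
      ((volume : Measure ℝ).prod volume) := by
    refine int_dom _ ?_ (fun t y => le_max_right _ _) (fun t => p (t - 2)) hp2_int
      (fun t => ?_) (fun t => ?_)
    · exact (((hp2_meas.comp measurable_fst).mul (hp2_meas.comp measurable_snd)).sub
        (measurable_const.mul ((hp_meas.comp measurable_fst).mul
          (hp_meas.comp measurable_snd)))).max measurable_const
    · exact (max_piece (fun y => p (t - 2) * p (y - 2)) (fun y => Real.exp ε * (p t * p y))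
        (hp2_int.const_mul _) (fun y => (mul_pos (hp_pos _) (hp_pos _)).le)
        ((measurable_const.mul (measurable_const.mul hp_meas)).aestronglyMeasurable)
        (fun y => (mul_pos (Real.exp_pos ε) (mul_pos (hp_pos t) (hp_pos y))).le)).1
    · calc (∫ y, max (p (t - 2) * p (y - 2) - Real.exp ε * (p t * p y)) 0)
          ≤ ∫ y, p (t - 2) * p (y - 2) := (max_piece (fun y => p (t - 2) * p (y - 2))
            (fun y => Real.exp ε * (p t * p y))
            (hp2_int.const_mul _) (fun y => (mul_pos (hp_pos _) (hp_pos _)).le)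
            ((measurable_const.mul (measurable_const.mul hp_meas)).aestronglyMeasurable)
            (fun y => (mul_pos (Real.exp_pos ε) (mul_pos (hp_pos t) (hp_pos y))).le)).2
        _ = p (t - 2) := by rw [integral_const_mul, hp2_one, mul_one]
  have hFint1 : Integrable (fun t => ∫ y, max (a t * b t y - Real.exp ε * (a' t * b' t y)) 0)
      (volume : Measure ℝ) := intF.integral_prod_left
  have hGint1 : Integrable (fun t => ∫ y, max (a t * p (y - 2) - Real.exp ε * (a' t * p y)) 0)
      (volume : Measure ℝ) := intG.integral_prod_left
  have hGint2 : Integrable (fun y => ∫ t, max (a t * p (y - 2) - Real.exp ε * (a' t * p y)) 0)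
      (volume : Measure ℝ) := intG.integral_prod_right
  have hKint2 : Integrable
      (fun y => ∫ t, max (p (t - 2) * p (y - 2) - Real.exp ε * (p t * p y)) 0)
      (volume : Measure ℝ) := intK.integral_prod_right
  calc ∫ t, ∫ y, max (a t * b t y - Real.exp ε * (a' t * b' t y)) 0
      ≤ ∫ t, (m : ℝ) * ∫ y, max (a t * p (y - 2) - Real.exp ε * (a' t * p y)) 0 :=
        integral_mono hFint1 (hGint1.const_mul _) step1
    _ = (m : ℝ) * ∫ t, ∫ y, max (a t * p (y - 2) - Real.exp ε * (a' t * p y)) 0 :=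
        integral_const_mul _ _
    _ = (m : ℝ) * ∫ y, ∫ t, max (a t * p (y - 2) - Real.exp ε * (a' t * p y)) 0 := by
        rw [integral_integral_swap intG]
    _ ≤ (m : ℝ) * ∫ y, (m : ℝ) * ∫ t,
          max (p (t - 2) * p (y - 2) - Real.exp ε * (p t * p y)) 0 :=
        mul_le_mul_of_nonneg_left
          (integral_mono hGint2 (hKint2.const_mul _) step4) (Nat.cast_nonneg m)
    _ = (m : ℝ) ^ 2 * ∫ y, ∫ t,
          max (p (t - 2) * p (y - 2) - Real.exp ε * (p t * p y)) 0 := by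
        rw [integral_const_mul]; ring
    _ = (m : ℝ) ^ 2 * ∫ t, ∫ y,
          max (p (t - 2) * p (y - 2) - Real.exp ε * (p t * p y)) 0 := by
        rw [integral_integral_swap intK]
end

section
/- Let σ > 0, Δ > 0, and let g(x) = (1/(σ√(2π))) · exp(−x²/(2σ²)) be the Gaussian density with standard deviation σ. Then for every ε ≥ Δ²/(2σ²): ∫_ℝ max(g(x−Δ) − e^ε · g(x), 0) dx ≤ exp(−(ε − Δ²/(2σ²))² · σ² / (2Δ²)). -/
open MeasureTheory Real

/-- Chernoff-type tail bound on the privacy profile of the Gaussian mechanism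
with noise scale σ and sensitivity Δ. -/
theorem gaussian_privacy_profile_tail_bound
    (σ Δ : ℝ) (hσ : 0 < σ) (hΔ : 0 < Δ)
    (g : ℝ → ℝ)
    (hg : ∀ x, g x = (1 / (σ * Real.sqrt (2 * Real.pi))) * Real.exp (-x ^ 2 / (2 * σ ^ 2)))
    (ε : ℝ) (hε : Δ ^ 2 / (2 * σ ^ 2) ≤ ε) :
    ∫ x, max (g (x - Δ) - Real.exp ε * g x) 0
      ≤ Real.exp (-(ε - Δ ^ 2 / (2 * σ ^ 2)) ^ 2 * σ ^ 2 / (2 * Δ ^ 2)) := by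
  have hπ : 0 < Real.sqrt (2 * Real.pi) := Real.sqrt_pos.2 (by positivity)
  set C : ℝ := 1 / (σ * Real.sqrt (2 * Real.pi)) with hC
  have hCpos : 0 < C := by positivity
  set t : ℝ := σ ^ 2 * ε / Δ + Δ / 2 with ht
  set a : ℝ := t - Δ with ha
  have key : Δ ^ 2 ≤ ε * (2 * σ ^ 2) := (div_le_iff₀ (by positivity)).1 hε
  have ha0 : 0 ≤ a := by
    have h2 : Δ / 2 ≤ σ ^ 2 * ε / Δ := by
      rw [le_div_iff₀ hΔ]; nlinarith
    rw [ha, ht]; linarith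
  set b : ℝ := 1 / (2 * σ ^ 2) with hb
  have hbpos : 0 < b := by positivity
  set K : ℝ := C * Real.exp (-a ^ 2 / (2 * σ ^ 2)) with hK
  have hKpos : 0 < K := by positivity
  -- pointwise bound
  have hbound : ∀ x, max (g (x - Δ) - Real.exp ε * g x) 0
      ≤ K * Real.exp (-b * (x - t) ^ 2) := by
    intro x
    have hrhs : 0 ≤ K * Real.exp (-b * (x - t) ^ 2) := by positivity
    rcases le_or_gt x t with hx | hx
    · have hle : g (x - Δ) - Real.exp ε * g x ≤ 0 := by
        rw [sub_nonpos, hg, hg]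
        rw [mul_comm (Real.exp ε), mul_assoc]
        apply mul_le_mul_of_nonneg_left _ hCpos.le
        rw [← Real.exp_add, Real.exp_le_exp]
        have hxΔ : x * Δ ≤ σ ^ 2 * ε + Δ ^ 2 / 2 := by
          have h4 := mul_le_mul_of_nonneg_right hx hΔ.le
          rw [ht, add_mul, div_mul_cancel₀ _ hΔ.ne'] at h4
          nlinarith
        have h5 : (x ^ 2 - (x - Δ) ^ 2) / (2 * σ ^ 2) ≤ ε := by
          rw [div_le_iff₀ (by positivity : (0:ℝ) < 2 * σ ^ 2)]
          nlinarith
        have h6 : -(x - Δ) ^ 2 / (2 * σ ^ 2) + x ^ 2 / (2 * σ ^ 2)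
            = (x ^ 2 - (x - Δ) ^ 2) / (2 * σ ^ 2) := by ring
        have h7 : -x ^ 2 / (2 * σ ^ 2) = -(x ^ 2 / (2 * σ ^ 2)) := by ring
        linarith
      exact max_le (hle.trans hrhs) hrhs
    · have hgx : 0 ≤ Real.exp ε * g x := by rw [hg]; positivity
      have h1 : g (x - Δ) ≤ K * Real.exp (-b * (x - t) ^ 2) := by
        rw [hg, hK, mul_assoc, ← Real.exp_add]
        apply mul_le_mul_of_nonneg_left _ hCpos.le
        rw [Real.exp_le_exp]
        have hxt : 0 ≤ x - t := le_of_lt (by linarith)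
        have hsq : a ^ 2 + (x - t) ^ 2 ≤ (x - Δ) ^ 2 := by
          have : x - Δ = (x - t) + a := by rw [ha]; ring
          rw [this]; nlinarith
        have h3 : -(x - Δ) ^ 2 / (2 * σ ^ 2) ≤ -(a ^ 2 + (x - t) ^ 2) / (2 * σ ^ 2) :=
          (div_le_div_iff_of_pos_right (by positivity)).2 (by linarith)
        have h4 : -(a ^ 2 + (x - t) ^ 2) / (2 * σ ^ 2)
            = -a ^ 2 / (2 * σ ^ 2) + -b * (x - t) ^ 2 := by rw [hb]; ring
        linarith
      exact max_le (by linarith) hrhs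
  have hint : Integrable (fun x => K * Real.exp (-b * (x - t) ^ 2)) := by
    exact ((integrable_exp_neg_mul_sq hbpos).comp_sub_right t).const_mul K
  have hmono : ∫ x, max (g (x - Δ) - Real.exp ε * g x) 0
      ≤ ∫ x, K * Real.exp (-b * (x - t) ^ 2) :=
    integral_mono_of_nonneg (Filter.Eventually.of_forall fun x => le_max_right _ _)
      hint (Filter.Eventually.of_forall hbound)
  have hsqrt : Real.sqrt (Real.pi / b) = σ * Real.sqrt (2 * Real.pi) := by
    have h1 : Real.pi / b = σ ^ 2 * (2 * Real.pi) := by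
      rw [hb]; field_simp
    rw [h1, Real.sqrt_mul (by positivity), Real.sqrt_sq hσ.le]
  have hcalc : ∫ x, K * Real.exp (-b * (x - t) ^ 2)
      = Real.exp (-a ^ 2 / (2 * σ ^ 2)) := by
    rw [integral_const_mul,
      integral_sub_right_eq_self (fun x => Real.exp (-b * x ^ 2)) t,
      integral_gaussian, hsqrt, hK, hC]
    field_simp
  have hexp : -a ^ 2 / (2 * σ ^ 2)
      = -(ε - Δ ^ 2 / (2 * σ ^ 2)) ^ 2 * σ ^ 2 / (2 * Δ ^ 2) := by
    rw [ha, ht]; field_simp; ring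
  rw [← hexp]
  rw [← hcalc]
  exact hmono
end

section
/- Let 𝒴 be a finite linearly ordered set and let Q, Q' : 𝒴 → (0,1] be strictly positive probability mass functions on 𝒴. Let (w_k)_{k≥1} be a probability mass function on the positive integers with probability generating function φ(z) = ∑_{k≥1} w_k z^k, and suppose its derivative φ'(z) = ∑_{k≥1} k·w_k·z^{k−1} is finite and strictly positive for all z ∈ [0,1]. Define A(y) = φ(Q(≤y)) − φ(Q(<y)) and A'(y) = φ(Q'(≤y)) − φ(Q'(<y)), where Q(≤y) = ∑_{z≤y} Q(z) and Q(<y) = ∑_{z<y} Q(z). Let f : [0,∞) → ℝ be a convex function. Then there exists, for each y ∈ 𝒴, a function g_y : 𝒴 → [0,1] such that, setting q_y = ∑_{z∈𝒴} g_y(z)·Q(z) and q'_y = ∑_{z∈𝒴} g_y(z)·Q'(z), one has ∑_{y∈𝒴} f(A(y)/A'(y)) · A'(y) ≤ ∑_{y∈𝒴} f( (Q(y)·φ'(q_y)) / (Q'(y)·φ'(q'_y)) ) · Q'(y) · φ'(q'_y). -/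
/-!
Since `Q(≤y) = Q(<y) + Q(y)`, the fundamental theorem of calculus writes
`A(y) = ∫₀¹ u` and `A'(y) = ∫₀¹ v` with `u t = Q(y) φ'(Q(<y) + t Q(y))` and
`v t = Q'(y) φ'(Q'(<y) + t Q'(y))`, both positive and continuous on `[0, 1]`.
If `c` is a subgradient of `f` at `x₀ = ∫u / ∫v`, then `f(u/v) v ≥ f(x₀) v + c (u - x₀ v)`, and
the right-hand side integrates to exactly `f(x₀) ∫v`; bounding that integral by the maximum of
the continuous integrand gives a `t_y ∈ [0, 1]` with `f(A/A') A' ≤ f(u(t_y)/v(t_y)) v(t_y)`.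
The kernel `g_y` is `1` below `y`, `t_y` at `y` and `0` above, so that
`q_y = Q(<y) + t_y Q(y)`.
-/

open Finset Real

/-- Cumulative mass `Q(≤ y)` of a pmf on a finite linearly ordered set. -/
noncomputable def cumLE {Y : Type*} [Fintype Y] [LinearOrder Y] (Q : Y → ℝ) (y : Y) : ℝ :=
  ∑ z ∈ Finset.univ.filter (fun z => z ≤ y), Q z

/-- Cumulative mass `Q(< y)` of a pmf on a finite linearly ordered set. -/
noncomputable def cumLT {Y : Type*} [Fintype Y] [LinearOrder Y] (Q : Y → ℝ) (y : Y) : ℝ :=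
  ∑ z ∈ Finset.univ.filter (fun z => z < y), Q z

namespace ConvexOn

variable {S : Set ℝ} {f : ℝ → ℝ}

lemma add_rightDeriv_mul_sub_le (hf : ConvexOn ℝ S f) {x₀ x : ℝ} (hx₀ : x₀ ∈ interior S)
    (hx : x ∈ S) : f x₀ + derivWithin f (Set.Ioi x₀) x₀ * (x - x₀) ≤ f x := by
  rcases lt_trichotomy x x₀ with hlt | rfl | hgt
  · have h := (hf.slope_le_leftDeriv_of_mem_interior hx hx₀ hlt).trans
      (hf.leftDeriv_le_rightDeriv_of_mem_interior hx₀)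
    rw [slope_def_field, div_le_iff₀ (sub_pos.2 hlt)] at h
    linarith
  · simp
  · have h := hf.rightDeriv_le_slope_of_mem_interior hx₀ hx hgt
    rw [slope_def_field, le_div_iff₀ (sub_pos.2 hgt)] at h
    linarith

lemma exists_map_integral_div_mul_le (hf : ConvexOn ℝ S f) {u v : ℝ → ℝ} {a b : ℝ}
    (hab : a < b) (hu : ContinuousOn u (Set.Icc a b)) (hv : ContinuousOn v (Set.Icc a b))
    (hv_pos : ∀ t ∈ Set.Icc a b, 0 < v t) (huv : ∀ t ∈ Set.Icc a b, u t / v t ∈ S)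
    (hmean : (∫ s in a..b, u s) / (∫ s in a..b, v s) ∈ interior S) :
    ∃ t ∈ Set.Icc a b, f ((∫ s in a..b, u s) / ∫ s in a..b, v s) * (∫ s in a..b, v s)
      ≤ (b - a) * (f (u t / v t) * v t) := by
  set x₀ := (∫ s in a..b, u s) / ∫ s in a..b, v s
  set c := derivWithin f (Set.Ioi x₀) x₀
  have hu_int : IntervalIntegrable u MeasureTheory.volume a b :=
    hu.intervalIntegrable_of_Icc hab.le
  have hv_int : IntervalIntegrable v MeasureTheory.volume a b :=
    hv.intervalIntegrable_of_Icc hab.le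
  have hv_int_pos : 0 < ∫ s in a..b, v s :=
    intervalIntegral.intervalIntegral_pos_of_pos_on hv_int
      (fun t ht => hv_pos t (Set.Ioo_subset_Icc_self ht)) hab
  set G : ℝ → ℝ := fun t => f x₀ * v t + c * (u t - x₀ * v t)
  have hG : ContinuousOn G (Set.Icc a b) := by fun_prop
  have hG_int : ∫ t in a..b, G t = f x₀ * ∫ s in a..b, v s := by
    simp only [G]
    rw [intervalIntegral.integral_add (hv_int.const_mul _)
        ((hu_int.sub (hv_int.const_mul _)).const_mul _),
      intervalIntegral.integral_const_mul, intervalIntegral.integral_const_mul,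
      intervalIntegral.integral_sub hu_int (hv_int.const_mul _),
      intervalIntegral.integral_const_mul, div_mul_cancel₀ _ hv_int_pos.ne']
    ring
  obtain ⟨t, ht, hmax⟩ := isCompact_Icc.exists_isMaxOn (Set.nonempty_Icc.2 hab.le) hG
  refine ⟨t, ht, ?_⟩
  have hG_le : G t ≤ f (u t / v t) * v t := by
    have h := mul_le_mul_of_nonneg_right (hf.add_rightDeriv_mul_sub_le hmean (huv t ht))
      (hv_pos t ht).le
    rwa [add_mul, mul_assoc, sub_mul, div_mul_cancel₀ _ (hv_pos t ht).ne'] at h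
  calc f x₀ * (∫ s in a..b, v s) = ∫ s in a..b, G s := hG_int.symm
    _ ≤ ∫ _ in a..b, G t :=
      intervalIntegral.integral_mono_on hab.le (hG.intervalIntegrable_of_Icc hab.le)
        intervalIntegrable_const fun s hs => hmax hs
    _ = (b - a) * G t := by simp
    _ ≤ (b - a) * (f (u t / v t) * v t) := by gcongr

end ConvexOn

section PowerSeries

variable {a : ℕ → ℝ}

lemma continuousOn_tsum_mul_pow (ha : Summable a) (e : ℕ → ℕ) :
    ContinuousOn (fun z => ∑' k, a k * z ^ e k) (Set.Icc (-1) 1) := by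
  refine continuousOn_tsum (fun k => by fun_prop) ha.abs fun k z hz => ?_
  rw [norm_mul, norm_pow, Real.norm_eq_abs]
  exact mul_le_of_le_one_right (abs_nonneg _) (pow_le_one₀ (norm_nonneg _) (abs_le.2 hz))

lemma hasDerivAt_tsum_mul_pow (ha : Summable fun k : ℕ => (k : ℝ) * a k) {z : ℝ}
    (hz : z ∈ Set.Ioo (-1) 1) :
    HasDerivAt (fun x => ∑' k, a k * x ^ k) (∑' k : ℕ, k * a k * z ^ (k - 1)) z := by
  refine hasDerivAt_tsum_of_isPreconnected (g := fun k x => a k * x ^ k)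
    (g' := fun k x => k * a k * x ^ (k - 1)) ha.abs isOpen_Ioo isPreconnected_Ioo
    (fun k x _ => ?_) (fun k x hx => ?_) (y₀ := 0) (by norm_num) ?_ hz
  · simpa [mul_comm, mul_assoc] using (hasDerivAt_pow k x).const_mul (a k)
  · rw [norm_mul, norm_pow, Real.norm_eq_abs]
    exact mul_le_of_le_one_right (abs_nonneg _)
      (pow_le_one₀ (norm_nonneg _) (abs_le.2 ⟨hx.1.le, hx.2.le⟩))
  · exact summable_of_ne_finset_zero (s := {0}) fun k hk => by simp_all

lemma integral_tsum_natCast_mul_mul_pow_sub_one (ha : Summable a)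
    (ha' : Summable fun k : ℕ => (k : ℝ) * a k) {x y : ℝ} (hx : -1 ≤ x) (hxy : x ≤ y) (hy : y ≤ 1) :
    ∫ z in x..y, ∑' k : ℕ, k * a k * z ^ (k - 1) = ∑' k, a k * y ^ k - ∑' k, a k * x ^ k := by
  have hsub : Set.Icc x y ⊆ Set.Icc (-1) 1 := Set.Icc_subset_Icc hx hy
  exact intervalIntegral.integral_eq_sub_of_hasDeriv_right_of_le hxy
    ((continuousOn_tsum_mul_pow ha _).mono hsub)
    (fun z hz =>
      (hasDerivAt_tsum_mul_pow ha' ⟨by linarith [hz.1], by linarith [hz.2]⟩).hasDerivWithinAt)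
    (((continuousOn_tsum_mul_pow ha' _).mono hsub).intervalIntegrable_of_Icc hxy)

end PowerSeries

section Increment

variable {φ φ' : ℝ → ℝ}

lemma integral_mul_comp_add_mul_eq_sub
    (hφ : ∀ x y, 0 ≤ x → x ≤ y → y ≤ 1 → ∫ z in x..y, φ' z = φ y - φ x)
    {x q : ℝ} (hx : 0 ≤ x) (hq : 0 ≤ q) (hxq : x + q ≤ 1) :
    ∫ t in (0 : ℝ)..1, q * φ' (x + t * q) = φ (x + q) - φ x := by
  simp_rw [mul_comm _ q]
  rw [intervalIntegral.integral_const_mul, intervalIntegral.mul_integral_comp_add_mul, mul_zero,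
    add_zero, mul_one]
  exact hφ x (x + q) hx (by linarith) hxq

lemma ConvexOn.exists_map_increment_div_mul_le {f : ℝ → ℝ} (hf : ConvexOn ℝ (Set.Ici 0) f)
    (hφ : ∀ x y, 0 ≤ x → x ≤ y → y ≤ 1 → ∫ z in x..y, φ' z = φ y - φ x)
    (hφ'_cont : ContinuousOn φ' (Set.Icc 0 1)) (hφ'_pos : ∀ z ∈ Set.Icc (0 : ℝ) 1, 0 < φ' z)
    {x q x' q' : ℝ} (hx : 0 ≤ x) (hq : 0 < q) (hxq : x + q ≤ 1)
    (hx' : 0 ≤ x') (hq' : 0 < q') (hxq' : x' + q' ≤ 1) :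
    ∃ t ∈ Set.Icc (0 : ℝ) 1,
      f ((φ (x + q) - φ x) / (φ (x' + q') - φ x')) * (φ (x' + q') - φ x')
        ≤ f (q * φ' (x + t * q) / (q' * φ' (x' + t * q'))) * (q' * φ' (x' + t * q')) := by
  have hmaps : ∀ {x q : ℝ}, 0 ≤ x → 0 ≤ q → x + q ≤ 1 →
      Set.MapsTo (fun t => x + t * q) (Set.Icc 0 1) (Set.Icc 0 1) := fun hx hq hxq t ht =>
    ⟨by have := ht.1; positivity, by nlinarith [ht.2]⟩
  have hcont : ∀ {x q : ℝ}, 0 ≤ x → 0 ≤ q → x + q ≤ 1 →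
      ContinuousOn (fun t => q * φ' (x + t * q)) (Set.Icc 0 1) := fun hx hq hxq =>
    continuousOn_const.mul (hφ'_cont.comp (by fun_prop) (hmaps hx hq hxq))
  have hpos : ∀ {x q : ℝ}, 0 ≤ x → 0 < q → x + q ≤ 1 →
      ∀ t ∈ Set.Icc (0 : ℝ) 1, 0 < q * φ' (x + t * q) := fun hx hq hxq t ht =>
    mul_pos hq (hφ'_pos _ (hmaps hx hq.le hxq ht))
  have hint_pos : ∀ {x q : ℝ}, 0 ≤ x → 0 < q → x + q ≤ 1 → 0 < φ (x + q) - φ x :=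
    fun hx hq hxq => integral_mul_comp_add_mul_eq_sub hφ hx hq.le hxq ▸
      intervalIntegral.intervalIntegral_pos_of_pos_on
        ((hcont hx hq.le hxq).intervalIntegrable_of_Icc zero_le_one)
        (fun t ht => hpos hx hq hxq t (Set.Ioo_subset_Icc_self ht)) zero_lt_one
  obtain ⟨t, ht, h⟩ := hf.exists_map_integral_div_mul_le zero_lt_one (hcont hx hq.le hxq)
    (hcont hx' hq'.le hxq') (hpos hx' hq' hxq')
    (fun t ht => (div_pos (hpos hx hq hxq t ht) (hpos hx' hq' hxq' t ht)).le)
    (by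
      rw [interior_Ici, integral_mul_comp_add_mul_eq_sub hφ hx hq.le hxq,
        integral_mul_comp_add_mul_eq_sub hφ hx' hq'.le hxq']
      exact div_pos (hint_pos hx hq hxq) (hint_pos hx' hq' hxq'))
  rw [integral_mul_comp_add_mul_eq_sub hφ hx hq.le hxq,
    integral_mul_comp_add_mul_eq_sub hφ hx' hq'.le hxq', sub_zero, one_mul] at h
  exact ⟨t, ht, h⟩

end Increment

section Cumulative

variable {Y : Type*} [Fintype Y] [LinearOrder Y]

lemma cumLE_eq_cumLT_add (R : Y → ℝ) (y : Y) : cumLE R y = cumLT R y + R y := by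
  have : univ.filter (· ≤ y) = insert y (univ.filter (· < y)) := by
    ext z; simp [le_iff_lt_or_eq, or_comm]
  rw [cumLE, cumLT, this, sum_insert (by simp), add_comm]

lemma cumLT_nonneg {R : Y → ℝ} (hR : ∀ z, 0 ≤ R z) (y : Y) : 0 ≤ cumLT R y :=
  sum_nonneg fun z _ => hR z

lemma cumLT_add_le_sum {R : Y → ℝ} (hR : ∀ z, 0 ≤ R z) (y : Y) : cumLT R y + R y ≤ ∑ z, R z :=
  cumLE_eq_cumLT_add R y ▸ sum_le_sum_of_subset_of_nonneg (filter_subset _ _) fun z _ _ => hR z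

lemma sum_ite_lt_ite_eq_mul (R : Y → ℝ) (y : Y) (t : ℝ) :
    ∑ z, (if z < y then 1 else if z = y then t else 0) * R z = cumLT R y + t * R y := by
  simp [ite_mul, sum_ite, cumLT]

end Cumulative

theorem private_selection_f_divergence_bound_general
    {Y : Type*} [Fintype Y] [LinearOrder Y]
    (Q Q' : Y → ℝ)
    (hQ_pos : ∀ y, 0 < Q y) (hQ_sum : ∑ y, Q y = 1)
    (hQ'_pos : ∀ y, 0 < Q' y) (hQ'_sum : ∑ y, Q' y = 1)
    (w : ℕ → ℝ)
    (hw_sum : ∑' k, w k = 1)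
    (φ : ℝ → ℝ) (hφ : ∀ z, φ z = ∑' k, w k * z ^ k)
    (φderiv : ℝ → ℝ)
    (hφderiv : ∀ z, φderiv z = ∑' k : ℕ, (k : ℝ) * w k * z ^ (k - 1))
    (hφderiv_summable : ∀ z ∈ Set.Icc (0 : ℝ) 1,
      Summable (fun k : ℕ => (k : ℝ) * w k * z ^ (k - 1)))
    (hφderiv_pos : ∀ z ∈ Set.Icc (0 : ℝ) 1, 0 < φderiv z)
    (f : ℝ → ℝ) (hf : ConvexOn ℝ (Set.Ici 0) f)
    (A A' : Y → ℝ)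
    (hA : ∀ y, A y = φ (cumLE Q y) - φ (cumLT Q y))
    (hA' : ∀ y, A' y = φ (cumLE Q' y) - φ (cumLT Q' y)) :
    ∃ g : Y → Y → ℝ, (∀ y z, g y z ∈ Set.Icc (0 : ℝ) 1) ∧
      ∑ y, f (A y / A' y) * A' y ≤
        ∑ y, f ((Q y * φderiv (∑ z, g y z * Q z)) / (Q' y * φderiv (∑ z, g y z * Q' z)))
          * (Q' y * φderiv (∑ z, g y z * Q' z)) := by
  -- `∑'` of a non-summable family is `0`, so `hw_sum` forces summability.
  have hw : Summable w := by
    by_contra h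
    simp [tsum_eq_zero_of_not_summable h] at hw_sum
  have hkw : Summable fun k : ℕ => (k : ℝ) * w k := by
    simpa using hφderiv_summable 1 (by norm_num)
  have hφ_ftc : ∀ x y, 0 ≤ x → x ≤ y → y ≤ 1 → ∫ z in x..y, φderiv z = φ y - φ x :=
    fun x y hx hxy hy => by
      simp only [hφ, hφderiv]
      exact integral_tsum_natCast_mul_mul_pow_sub_one hw hkw (by linarith) hxy hy
  have hφderiv_cont : ContinuousOn φderiv (Set.Icc 0 1) := by
    simp only [funext hφderiv]
    exact (continuousOn_tsum_mul_pow hkw _).mono (Set.Icc_subset_Icc (by norm_num) le_rfl)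
  have key y := hf.exists_map_increment_div_mul_le hφ_ftc hφderiv_cont hφderiv_pos
    (cumLT_nonneg (fun z => (hQ_pos z).le) y) (hQ_pos y)
    (hQ_sum ▸ cumLT_add_le_sum (fun z => (hQ_pos z).le) y)
    (cumLT_nonneg (fun z => (hQ'_pos z).le) y) (hQ'_pos y)
    (hQ'_sum ▸ cumLT_add_le_sum (fun z => (hQ'_pos z).le) y)
  choose t ht hle using key
  refine ⟨fun y z => if z < y then 1 else if z = y then t y else 0, fun y z => ?_,
    sum_le_sum fun y _ => ?_⟩
  · dsimp only
    split_ifs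
    exacts [⟨zero_le_one, le_rfl⟩, ht y, ⟨le_rfl, zero_le_one⟩]
  · simpa only [hA, hA', cumLE_eq_cumLT_add, sum_ite_lt_ite_eq_mul] using hle y

/-- Theorem 4.1: general f-divergence bound for private selection. -/
theorem private_selection_f_divergence_bound
    {Y : Type*} [Fintype Y] [LinearOrder Y]
    (Q Q' : Y → ℝ)
    (hQ_pos : ∀ y, 0 < Q y) (hQ_le : ∀ y, Q y ≤ 1) (hQ_sum : ∑ y, Q y = 1)
    (hQ'_pos : ∀ y, 0 < Q' y) (hQ'_le : ∀ y, Q' y ≤ 1) (hQ'_sum : ∑ y, Q' y = 1)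
    (w : ℕ → ℝ) (hw_nonneg : ∀ k, 0 ≤ w k) (hw_zero : w 0 = 0)
    (hw_sum : ∑' k, w k = 1)
    (φ : ℝ → ℝ) (hφ : ∀ z, φ z = ∑' k, w k * z ^ k)
    (φderiv : ℝ → ℝ)
    (hφderiv : ∀ z, φderiv z = ∑' k : ℕ, (k : ℝ) * w k * z ^ (k - 1))
    (hφderiv_summable : ∀ z ∈ Set.Icc (0 : ℝ) 1,
      Summable (fun k : ℕ => (k : ℝ) * w k * z ^ (k - 1)))
    (hφderiv_pos : ∀ z ∈ Set.Icc (0 : ℝ) 1, 0 < φderiv z)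
    (f : ℝ → ℝ) (hf : ConvexOn ℝ (Set.Ici 0) f)
    (A A' : Y → ℝ)
    (hA : ∀ y, A y = φ (cumLE Q y) - φ (cumLT Q y))
    (hA' : ∀ y, A' y = φ (cumLE Q' y) - φ (cumLT Q' y)) :
    ∃ g : Y → Y → ℝ, (∀ y z, g y z ∈ Set.Icc (0 : ℝ) 1) ∧
      ∑ y, f (A y / A' y) * A' y ≤
        ∑ y, f ((Q y * φderiv (∑ z, g y z * Q z)) / (Q' y * φderiv (∑ z, g y z * Q' z)))
          * (Q' y * φderiv (∑ z, g y z * Q' z)) :=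
  private_selection_f_divergence_bound_general Q Q' hQ_pos hQ_sum hQ'_pos hQ'_sum w hw_sum φ hφ
    φderiv hφderiv hφderiv_summable hφderiv_pos f hf A A' hA hA'
end

section
/- Let γ ∈ (0,1), η > −1, ε₁ ≥ 0, d ≥ 0, and let q, q' ∈ [0,1] satisfy 1 − q' ≤ e^{ε₁}·(1 − q) + d. Then ( (1 − (1−γ)q') / (1 − (1−γ)q) )^{η+1} ≤ ( e^{ε₁} + ((1−γ)/γ)·d )^{η+1}. -/
open Real

/-- Key analytic inequality in the proof of Theorem 5.2: bound on the ratio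
φ'(q)/φ'(q') for the truncated negative binomial PGF. -/
theorem negbin_pgf_deriv_ratio_bound
    (γ η ε₁ d : ℝ) (hγ : γ ∈ Set.Ioo (0 : ℝ) 1) (hη : -1 < η)
    (hε₁ : 0 ≤ ε₁) (hd : 0 ≤ d)
    (q q' : ℝ) (hq : q ∈ Set.Icc (0 : ℝ) 1) (hq' : q' ∈ Set.Icc (0 : ℝ) 1)
    (h : 1 - q' ≤ Real.exp ε₁ * (1 - q) + d) :
    ((1 - (1 - γ) * q') / (1 - (1 - γ) * q)) ^ (η + 1)
      ≤ (Real.exp ε₁ + ((1 - γ) / γ) * d) ^ (η + 1) := by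
  obtain ⟨hγ0, hγ1⟩ := hγ
  obtain ⟨hq0, hq1⟩ := hq
  obtain ⟨hq'0, hq'1⟩ := hq'
  have ha0 : (0:ℝ) ≤ 1 - γ := by linarith
  have hden : 0 < 1 - (1 - γ) * q := by nlinarith
  have hnum : 0 ≤ 1 - (1 - γ) * q' := by nlinarith
  have he1 : 1 ≤ Real.exp ε₁ := Real.one_le_exp hε₁
  have hratio : (1 - (1 - γ) * q') / (1 - (1 - γ) * q)
      ≤ Real.exp ε₁ + ((1 - γ) / γ) * d := by
    rw [div_le_iff₀ hden, add_mul]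
    have key : (1 - γ) * d ≤ (1 - γ) / γ * d * (1 - (1 - γ) * q) := by
      rw [div_mul_eq_mul_div, div_mul_eq_mul_div, le_div_iff₀ hγ0]
      nlinarith [mul_nonneg (mul_nonneg ha0 hd) (mul_nonneg ha0 (sub_nonneg.2 hq1))]
    nlinarith [mul_le_mul_of_nonneg_left h ha0,
      mul_nonneg (sub_nonneg.2 he1) (sub_nonneg.2 hγ1.le)]
  exact Real.rpow_le_rpow (div_nonneg hnum hden.le) hratio (by linarith)
end

section
/- Let p ∈ (0,1), d ≥ 0, and ε₁ ∈ ℝ with e^{ε₁} ≥ 1 + (p/(1−p))·d. Let q, q' ∈ [0,1] satisfy q ≤ e^{ε₁}·q' + d. Then (1 − p + p·q)/(1 − p + p·q') ≤ 1 + p·(e^{ε₁} − 1) + p·d; consequently, for every natural number n ≥ 1, ((1 − p + p·q)/(1 − p + p·q'))^{n−1} ≤ (1 + p·(e^{ε₁} − 1) + p·d)^{n−1}. -/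
open Real

/-- Key analytic inequality in the proof of Theorem 5.7: bound on the ratio
φ'(q)/φ'(q') for the binomial PGF. -/
theorem binomial_pgf_deriv_ratio_bound
    (p d ε₁ : ℝ) (hp : p ∈ Set.Ioo (0 : ℝ) 1) (hd : 0 ≤ d)
    (hε₁ : 1 + (p / (1 - p)) * d ≤ Real.exp ε₁)
    (q q' : ℝ) (hq : q ∈ Set.Icc (0 : ℝ) 1) (hq' : q' ∈ Set.Icc (0 : ℝ) 1)
    (h : q ≤ Real.exp ε₁ * q' + d) :
    (1 - p + p * q) / (1 - p + p * q') ≤ 1 + p * (Real.exp ε₁ - 1) + p * d ∧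
    ∀ n : ℕ, 1 ≤ n →
      ((1 - p + p * q) / (1 - p + p * q')) ^ (n - 1)
        ≤ (1 + p * (Real.exp ε₁ - 1) + p * d) ^ (n - 1) := by
  obtain ⟨hp0, hp1⟩ := hp
  obtain ⟨hq0, hq1⟩ := hq
  obtain ⟨hq'0, hq'1⟩ := hq'
  have h1p : (0:ℝ) < 1 - p := by linarith
  have hden : 0 < 1 - p + p * q' := by nlinarith
  have hE : p * d ≤ (Real.exp ε₁ - 1) * (1 - p) := by
    have := hε₁
    have : p / (1 - p) * d = p * d / (1 - p) := by ring
    nlinarith [mul_le_mul_of_nonneg_right hε₁ h1p.le, div_mul_cancel₀ (p*d) h1p.ne']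
  have hmain : (1 - p + p * q) / (1 - p + p * q') ≤ 1 + p * (Real.exp ε₁ - 1) + p * d := by
    rw [div_le_iff₀ hden]
    nlinarith [mul_nonneg (mul_nonneg hd hp0.le) (sub_nonneg.2 hq'1),
      mul_nonneg (sub_nonneg.2 hE) (sub_nonneg.2 hq'1),
      mul_le_mul_of_nonneg_left h hp0.le]
  refine ⟨hmain, fun n _ => ?_⟩
  have hnum : 0 < 1 - p + p * q := by nlinarith
  exact pow_le_pow_left₀ (div_nonneg hnum.le hden.le) hmain _
end

section
/- Let 𝒴 be a finite linearly ordered set, let Q, Q' : 𝒴 → [0,1] be probability mass functions on 𝒴, and let w, v : ℕ → [0,∞) be two probability mass functions on the nonnegative integers. Define A_w(y) = ∑_{k≥1} w(k)·(Q(≤y)^k − Q(<y)^k), A'_w(y) = ∑_{k≥1} w(k)·(Q'(≤y)^k − Q'(<y)^k), and analogously A_v, A'_v with v in place of w. Then for every ε ∈ ℝ: ∑_{y∈𝒴} max(A_w(y) − e^ε·A'_w(y), 0) ≤ ∑_{y∈𝒴} max(A_v(y) − e^ε·A'_v(y), 0) + (1 + e^ε)·∑_{k≥0} |w(k) − v(k)|.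 -/
open Finset Real

section aux
variable {Y : Type*} [Fintype Y] [LinearOrder Y]

lemma cumLT_le_cumLE' (Q : Y → ℝ) (h0 : ∀ y, 0 ≤ Q y) (y : Y) :
    (∑ z ∈ Finset.univ.filter (fun z => z < y), Q z) ≤
      ∑ z ∈ Finset.univ.filter (fun z => z ≤ y), Q z := by
  apply Finset.sum_le_sum_of_subset_of_nonneg
  · intro z hz
    simp only [Finset.mem_filter, Finset.mem_univ, true_and] at *
    exact hz.le
  · intro z _ _; exact h0 z

lemma sum_T_le_one (Q : Y → ℝ) (h0 : ∀ y, 0 ≤ Q y) (h1 : ∑ y, Q y = 1) (k : ℕ) :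
    ∑ y, ((∑ z ∈ Finset.univ.filter (fun z => z ≤ y), Q z) ^ k
        - (∑ z ∈ Finset.univ.filter (fun z => z < y), Q z) ^ k) ≤ 1 := by
  classical
  set n := Fintype.card Y with hn
  let e : Fin n ≃o Y := monoEquivOfFin Y rfl
  set s : ℕ → ℝ := fun i => ∑ j ∈ Finset.univ.filter (fun j : Fin n => (j : ℕ) < i), Q (e j)
    with hs
  have hLE : ∀ i : Fin n, (∑ z ∈ Finset.univ.filter (fun z => z ≤ e i), Q z) = s ((i : ℕ) + 1) := by
    intro i
    simp only [hs, Finset.sum_filter]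
    refine (Fintype.sum_equiv e.toEquiv _ _ ?_).symm
    intro j
    have hiff : ((j : ℕ) < (i : ℕ) + 1) ↔ e j ≤ e i := by
      rw [Nat.lt_succ_iff, ← Fin.le_def, e.le_iff_le]
    simp only [hiff]
    rfl
  have hLT : ∀ i : Fin n, (∑ z ∈ Finset.univ.filter (fun z => z < e i), Q z) = s (i : ℕ) := by
    intro i
    simp only [hs, Finset.sum_filter]
    refine (Fintype.sum_equiv e.toEquiv _ _ ?_).symm
    intro j
    have hiff : ((j : ℕ) < (i : ℕ)) ↔ e j < e i := by
      rw [← Fin.lt_def, e.lt_iff_lt]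
    simp only [hiff]
    rfl
  have hsum : ∑ y, ((∑ z ∈ Finset.univ.filter (fun z => z ≤ y), Q z) ^ k
        - (∑ z ∈ Finset.univ.filter (fun z => z < y), Q z) ^ k)
      = ∑ i : Fin n, (s ((i : ℕ) + 1) ^ k - s (i : ℕ) ^ k) := by
    refine (Fintype.sum_equiv e.toEquiv _ _ ?_).symm
    intro i
    show s ((i : ℕ) + 1) ^ k - s (i : ℕ) ^ k
      = (∑ z ∈ Finset.univ.filter (fun z => z ≤ e i), Q z) ^ k
        - (∑ z ∈ Finset.univ.filter (fun z => z < e i), Q z) ^ k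
    rw [hLE i, hLT i]
  rw [hsum, Fin.sum_univ_eq_sum_range (fun i => s (i + 1) ^ k - s i ^ k) n,
    Finset.sum_range_sub (fun i => s i ^ k)]
  have hs0 : s 0 = 0 := by
    simp only [hs]
    apply Finset.sum_eq_zero
    intro j hj
    simp at hj
  have hsn : s n = 1 := by
    simp only [hs]
    have hfil : (Finset.univ.filter (fun j : Fin n => (j : ℕ) < n)) = Finset.univ := by
      apply Finset.filter_true_of_mem
      intro j _
      exact j.isLt
    rw [hfil, ← h1]
    exact Fintype.sum_equiv e.toEquiv _ _ (fun j => rfl)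
  rw [hs0, hsn, one_pow]
  have : (0 : ℝ) ≤ 0 ^ k := by positivity
  linarith

lemma summable_of_tsum_one (w : ℕ → ℝ) (h : ∑' k, w k = 1) : Summable w := by
  by_contra h'
  rw [tsum_eq_zero_of_not_summable h'] at h
  norm_num at h

lemma abs_A_sub_le (Q : Y → ℝ) (h0 : ∀ y, 0 ≤ Q y) (hle : ∀ y, Q y ≤ 1)
    (h1 : ∑ y, Q y = 1)
    (w v : ℕ → ℝ) (hw : Summable w) (hv : Summable v)
    (hw0 : ∀ k, 0 ≤ w k) (hv0 : ∀ k, 0 ≤ v k) :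
    ∑ y, |(∑' k : ℕ, w k * (cumLE Q y ^ k - cumLT Q y ^ k)) -
          (∑' k : ℕ, v k * (cumLE Q y ^ k - cumLT Q y ^ k))| ≤ ∑' k, |w k - v k| := by
  set T : ℕ → Y → ℝ := fun k y => cumLE Q y ^ k - cumLT Q y ^ k with hT
  have hT0 : ∀ k y, 0 ≤ T k y := by
    intro k y
    have h01 : 0 ≤ cumLT Q y := Finset.sum_nonneg fun z _ => h0 z
    have h02 : cumLT Q y ≤ cumLE Q y := cumLT_le_cumLE' Q h0 y
    simpa [hT] using sub_nonneg.mpr (pow_le_pow_left₀ h01 h02 k)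
  have hT1 : ∀ k y, T k y ≤ 1 := by
    intro k y
    have h01 : 0 ≤ cumLT Q y := Finset.sum_nonneg fun z _ => h0 z
    have h02 : cumLT Q y ≤ cumLE Q y := cumLT_le_cumLE' Q h0 y
    have h03 : cumLE Q y ≤ 1 := by
      rw [cumLE, ← h1]
      exact Finset.sum_le_sum_of_subset_of_nonneg (Finset.filter_subset _ _)
        fun z _ _ => h0 z
    have : cumLE Q y ^ k ≤ 1 := pow_le_one₀ (h01.trans h02) h03
    have h04 : 0 ≤ cumLT Q y ^ k := pow_nonneg h01 k
    simp only [hT]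
    linarith
  have hSw : ∀ y, Summable (fun k => w k * T k y) := by
    intro y
    refine Summable.of_nonneg_of_le (fun k => mul_nonneg (hw0 k) (hT0 k y))
      (fun k => mul_le_of_le_one_right (hw0 k) (hT1 k y)) hw
  have hSv : ∀ y, Summable (fun k => v k * T k y) := by
    intro y
    refine Summable.of_nonneg_of_le (fun k => mul_nonneg (hv0 k) (hT0 k y))
      (fun k => mul_le_of_le_one_right (hv0 k) (hT1 k y)) hv
  have hD : Summable (fun k => |w k - v k|) := (hw.sub hv).abs
  have hSd : ∀ y, Summable (fun k => |w k - v k| * T k y) := by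
    intro y
    refine Summable.of_nonneg_of_le (fun k => mul_nonneg (abs_nonneg _) (hT0 k y))
      (fun k => mul_le_of_le_one_right (abs_nonneg _) (hT1 k y)) hD
  have step1 : ∀ y, |(∑' k : ℕ, w k * T k y) - (∑' k : ℕ, v k * T k y)|
      ≤ ∑' k, |w k - v k| * T k y := by
    intro y
    rw [← Summable.tsum_sub (hSw y) (hSv y)]
    have heq : ∀ k, w k * T k y - v k * T k y = (w k - v k) * T k y := fun k => by ring
    calc |∑' k, (w k * T k y - v k * T k y)|
        = |∑' k, (w k - v k) * T k y| := by rw [tsum_congr heq]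
      _ ≤ ∑' k, |w k - v k| * T k y := by
          have h := norm_tsum_le_tsum_norm (f := fun k => (w k - v k) * T k y)
            (by simpa [Real.norm_eq_abs, abs_mul, abs_of_nonneg (hT0 _ y)] using hSd y)
          simpa [Real.norm_eq_abs, abs_mul, abs_of_nonneg (hT0 _ y)] using h
  calc ∑ y, |(∑' k : ℕ, w k * T k y) - (∑' k : ℕ, v k * T k y)|
      ≤ ∑ y, ∑' k, |w k - v k| * T k y := Finset.sum_le_sum fun y _ => step1 y
    _ = ∑' k, ∑ y, |w k - v k| * T k y := (Summable.tsum_finsetSum fun y _ => hSd y).symm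
    _ = ∑' k, |w k - v k| * ∑ y, T k y := by
        refine tsum_congr fun k => ?_
        rw [Finset.mul_sum]
    _ ≤ ∑' k, |w k - v k| := by
        refine Summable.tsum_le_tsum (fun k => ?_) ?_ hD
        · exact mul_le_of_le_one_right (abs_nonneg _) (sum_T_le_one Q h0 h1 k)
        · refine Summable.of_nonneg_of_le
            (fun k => mul_nonneg (abs_nonneg _) (Finset.sum_nonneg fun y _ => hT0 k y))
            (fun k => mul_le_of_le_one_right (abs_nonneg _) (sum_T_le_one Q h0 h1 k)) hD

end aux

/-- Stability estimate (Le Cam / total-variation step in the proof of Corollary 5.8):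
the hockey-stick divergence between the selection algorithm's output distributions
changes by at most `(1 + e^ε)` times the ℓ¹-distance between the distributions of `K`.
(The `k = 0` summand vanishes, so summing over all of ℕ agrees with summing over `k ≥ 1`.) -/
theorem private_selection_pgf_stability
    {Y : Type*} [Fintype Y] [LinearOrder Y]
    (Q Q' : Y → ℝ)
    (hQ_nonneg : ∀ y, 0 ≤ Q y) (hQ_le : ∀ y, Q y ≤ 1) (hQ_sum : ∑ y, Q y = 1)
    (hQ'_nonneg : ∀ y, 0 ≤ Q' y) (hQ'_le : ∀ y, Q' y ≤ 1) (hQ'_sum : ∑ y, Q' y = 1)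
    (w v : ℕ → ℝ)
    (hw_nonneg : ∀ k, 0 ≤ w k) (hw_sum : ∑' k : ℕ, w k = 1)
    (hv_nonneg : ∀ k, 0 ≤ v k) (hv_sum : ∑' k : ℕ, v k = 1)
    (Aw Aw' Av Av' : Y → ℝ)
    (hAw : ∀ y, Aw y = ∑' k : ℕ, w k * (cumLE Q y ^ k - cumLT Q y ^ k))
    (hAw' : ∀ y, Aw' y = ∑' k : ℕ, w k * (cumLE Q' y ^ k - cumLT Q' y ^ k))
    (hAv : ∀ y, Av y = ∑' k : ℕ, v k * (cumLE Q y ^ k - cumLT Q y ^ k))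
    (hAv' : ∀ y, Av' y = ∑' k : ℕ, v k * (cumLE Q' y ^ k - cumLT Q' y ^ k))
    (ε : ℝ) :
    ∑ y, max (Aw y - Real.exp ε * Aw' y) 0
      ≤ ∑ y, max (Av y - Real.exp ε * Av' y) 0
        + (1 + Real.exp ε) * ∑' k : ℕ, |w k - v k| := by
  have hwS := summable_of_tsum_one w hw_sum
  have hvS := summable_of_tsum_one v hv_sum
  set E := Real.exp ε with hE
  have hEpos : 0 < E := Real.exp_pos ε
  set D := ∑' k : ℕ, |w k - v k| with hD
  have hD1 : ∑ y, |Aw y - Av y| ≤ D := by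
    have h := abs_A_sub_le Q hQ_nonneg hQ_le hQ_sum w v hwS hvS hw_nonneg hv_nonneg
    calc ∑ y, |Aw y - Av y|
        = ∑ y, |(∑' k : ℕ, w k * (cumLE Q y ^ k - cumLT Q y ^ k)) -
            (∑' k : ℕ, v k * (cumLE Q y ^ k - cumLT Q y ^ k))| := by
          refine Finset.sum_congr rfl fun y _ => ?_
          rw [hAw y, hAv y]
      _ ≤ D := h
  have hD2 : ∑ y, |Aw' y - Av' y| ≤ D := by
    have h := abs_A_sub_le Q' hQ'_nonneg hQ'_le hQ'_sum w v hwS hvS hw_nonneg hv_nonneg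
    calc ∑ y, |Aw' y - Av' y|
        = ∑ y, |(∑' k : ℕ, w k * (cumLE Q' y ^ k - cumLT Q' y ^ k)) -
            (∑' k : ℕ, v k * (cumLE Q' y ^ k - cumLT Q' y ^ k))| := by
          refine Finset.sum_congr rfl fun y _ => ?_
          rw [hAw' y, hAv' y]
      _ ≤ D := h
  have key : ∀ y ∈ (Finset.univ : Finset Y), max (Aw y - E * Aw' y) 0 ≤
      max (Av y - E * Av' y) 0 + (|Aw y - Av y| + E * |Aw' y - Av' y|) := by
    intro y _
    apply max_le
    · have e1 : Av y - E * Av' y ≤ max (Av y - E * Av' y) 0 := le_max_left _ _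
      have e2 : Aw y - Av y ≤ |Aw y - Av y| := le_abs_self _
      have e3 : E * (Av' y - Aw' y) ≤ E * |Aw' y - Av' y| := by
        refine mul_le_mul_of_nonneg_left ?_ hEpos.le
        rw [abs_sub_comm]
        exact le_abs_self _
      rw [mul_sub] at e3
      linarith
    · exact add_nonneg (le_max_right _ _)
        (add_nonneg (abs_nonneg _) (mul_nonneg hEpos.le (abs_nonneg _)))
  calc ∑ y, max (Aw y - E * Aw' y) 0
      ≤ ∑ y, (max (Av y - E * Av' y) 0 + (|Aw y - Av y| + E * |Aw' y - Av' y|)) :=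
        Finset.sum_le_sum key
    _ = ∑ y, max (Av y - E * Av' y) 0
        + (∑ y, |Aw y - Av y| + E * ∑ y, |Aw' y - Av' y|) := by
        rw [Finset.sum_add_distrib, Finset.sum_add_distrib, Finset.mul_sum]
    _ ≤ ∑ y, max (Av y - E * Av' y) 0 + (D + E * D) := by
        have : ∑ y, |Aw y - Av y| + E * ∑ y, |Aw' y - Av' y| ≤ D + E * D := by
          have := mul_le_mul_of_nonneg_left hD2 hEpos.le
          linarith
        linarith
    _ = ∑ y, max (Av y - E * Av' y) 0 + (1 + E) * D := by ring
end
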